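/- Fix n ≥ 2, and regard s_n = s_n(χ), a_n = a_n(χ) = ⟨f_{n+1}, s_n(χ)⟩_S/‖s_n(χ)‖_S² and b̃_n = b̃_n(χ) = ⟨f_{n+1}, s_{n−1}(χ)⟩_S/‖s_{n−1}(χ)‖_S² as functions of the parameter χ > 0. Then lim_{χ→∞} χ·b̃_n(χ) = ‖p_n‖₂²/‖p_{n−2}‖₂² and lim_{χ→∞} χ·a_n(χ) = ⟨f_{n+1}, f_n⟩₂/‖p_{n−1}‖₂². -/

import Mathlib

/-!
Testing the Sobolev minimality of `s_{j+1}` against the monic polynomial `𝒢 p_j`, and using that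
`Δ s_{j+1} - p_j ∈ W_{j-1}` is orthogonal to `p_j`, gives
`‖s_{j+1}‖₂² + χ ‖Δ s_{j+1} - p_j‖₂² ≤ ‖𝒢 p_j‖₂²`. Hence `‖s_{j+1}‖_S² / χ → ‖p_j‖₂²` and
`Δ s_{j+1} → p_j` as `χ → ∞`.

For the numerators, symmetry of `𝒢` gives `⟨f_{n+1}, s_{n-1}⟩_S = ⟨p_n, 𝒢 s_{n-1}⟩₂ = ‖p_n‖₂²`,
as `𝒢 s_{n-1}` is monic of degree `n`; and `⟨f_{n+1}, s_n⟩_S = ⟨f_{n+1}, 𝒢 Δ s_n⟩₂`, which tends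
to `⟨f_{n+1}, f_n⟩₂` because `𝒢` is bounded on `W`.
-/

open Filter RealInnerProductSpace

variable {H : Type*} [NormedAddCommGroup H] [InnerProductSpace ℝ H]

/-- `Wlt P n` is the span of `P 0, …, P (n-1)`; thus `Wlt P 0 = ⊥ = W_{-1}` and
`Wlt P (n+1)` is the space `W_n = span{P_0, …, P_n}`. -/
def Wlt (P : ℕ → H) (n : ℕ) : Submodule ℝ H := Submodule.span ℝ (P '' Set.Iio n)

/-- `Wtot P` is the space `W = ⋃ₙ Wₙ` of all polynomials. -/
def Wtot (P : ℕ → H) : Submodule ℝ H := Submodule.span ℝ (Set.range P)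

/-- The Sobolev inner product `⟨f, g⟩_S = ⟨f, g⟩₂ + χ⟨Δf, Δg⟩₂`. -/
noncomputable def innerS (Δ : H →ₗ[ℝ] H) (χ : ℝ) (f g : H) : ℝ :=
  ⟪ f, g ⟫ + χ * ⟪ Δ f, Δ g ⟫

/-- The Sobolev norm `‖f‖_S = √(‖f‖₂² + χ‖Δf‖₂²)`. -/
noncomputable def normS (Δ : H →ₗ[ℝ] H) (χ : ℝ) (f : H) : ℝ :=
  Real.sqrt (‖f‖ ^ 2 + χ * ‖Δ f‖ ^ 2)

section Spans

variable {P : ℕ → H}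

theorem Wlt_mono {a b : ℕ} (h : a ≤ b) : Wlt P a ≤ Wlt P b :=
  Submodule.span_mono (Set.image_mono fun _ hx => lt_of_lt_of_le hx h)

theorem Wlt_le_Wtot (m : ℕ) : Wlt P m ≤ Wtot P :=
  Submodule.span_mono (Set.image_subset_range P _)

theorem P_mem_Wlt {j m : ℕ} (h : j < m) : P j ∈ Wlt P m :=
  Submodule.subset_span ⟨j, h, rfl⟩

theorem exists_eq_smul_add_of_mem_Wlt_succ {m : ℕ} {u : H} (hu : u ∈ Wlt P (m + 1)) :
    ∃ c : ℝ, ∃ w ∈ Wlt P m, u = c • P m + w := by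
  have hins : Set.Iio (m + 1) = insert m (Set.Iio m) := by
    ext x; simp only [Set.mem_Iio, Set.mem_insert_iff]; omega
  rw [Wlt, hins, Set.image_insert_eq] at hu
  exact Submodule.mem_span_insert.mp hu

theorem eq_zero_of_smul_mem_Wlt (hP : LinearIndependent ℝ P) {m : ℕ} {c : ℝ}
    (h : c • P m ∈ Wlt P m) : c = 0 := by
  by_contra hc
  have h' := (Wlt P m).smul_mem c⁻¹ h
  rw [smul_smul, inv_mul_cancel₀ hc, one_smul] at h'
  exact hP.notMem_span_image (by simp) h'

def IsMonic (P : ℕ → H) (m : ℕ) (u : H) : Prop := u - P m ∈ Wlt P m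

namespace IsMonic

variable {m : ℕ} {u v : H}

theorem mem_Wlt_succ (h : IsMonic P m u) : u ∈ Wlt P (m + 1) := by
  rw [← sub_add_cancel u (P m)]
  exact add_mem (Wlt_mono m.le_succ h) (P_mem_Wlt m.lt_succ_self)

theorem mem_Wtot (h : IsMonic P m u) : u ∈ Wtot P :=
  Wlt_le_Wtot _ h.mem_Wlt_succ

theorem sub_mem (hu : IsMonic P m u) (hv : IsMonic P m v) : u - v ∈ Wlt P m := by
  simpa only [sub_sub_sub_cancel_right] using Submodule.sub_mem _ hu hv

theorem ne_zero (hP : LinearIndependent ℝ P) (h : IsMonic P m u) : u ≠ 0 := by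
  rintro rfl
  have h' := neg_mem h
  rw [zero_sub, neg_neg] at h'
  exact hP.notMem_span_image (by simp) h'

theorem inner_eq_norm_sq (hu : IsMonic P m u) (hortho : ∀ w ∈ Wlt P m, ⟪u, w⟫ = 0)
    (hv : IsMonic P m v) : ⟪u, v⟫ = ‖u‖ ^ 2 := by
  rw [← add_sub_cancel u v, inner_add_right, hortho _ (hv.sub_mem hu), add_zero,
    real_inner_self_eq_norm_sq]

end IsMonic

end Spans

section Laplacian

variable {P : ℕ → H} {Δ : H →ₗ[ℝ] H}

theorem delta_mem_Wlt (hΔ0 : Δ (P 0) = 0) (hΔsucc : ∀ n, Δ (P (n + 1)) = P n)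
    {m : ℕ} {u : H} (hu : u ∈ Wlt P (m + 1)) : Δ u ∈ Wlt P m := by
  induction hu using Submodule.span_induction with
  | mem x hx =>
    obtain ⟨j, hj, rfl⟩ := hx
    cases j with
    | zero => rw [hΔ0]; exact zero_mem _
    | succ i => rw [hΔsucc]; exact P_mem_Wlt (by simp only [Set.mem_Iio] at hj; omega)
  | zero => rw [map_zero]; exact zero_mem _
  | add x y _ _ hx hy => rw [map_add]; exact add_mem hx hy
  | smul a x _ hx => rw [map_smul]; exact Submodule.smul_mem _ _ hx

theorem IsMonic.delta (hΔ0 : Δ (P 0) = 0) (hΔsucc : ∀ n, Δ (P (n + 1)) = P n)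
    {m : ℕ} {u : H} (h : IsMonic P (m + 1) u) : IsMonic P m (Δ u) := by
  have h' := delta_mem_Wlt hΔ0 hΔsucc h
  rwa [map_sub, hΔsucc] at h'

theorem mem_Wlt_succ_of_delta_mem (hP : LinearIndependent ℝ P) (hΔ0 : Δ (P 0) = 0)
    (hΔsucc : ∀ n, Δ (P (n + 1)) = P n) {m N : ℕ} {u : H} (hu : u ∈ Wlt P N)
    (hΔu : Δ u ∈ Wlt P m) : u ∈ Wlt P (m + 1) := by
  induction N generalizing u with
  | zero => exact Wlt_mono (Nat.zero_le _) hu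
  | succ N ih =>
    by_cases hN : N ≤ m
    · exact Wlt_mono (by omega) hu
    obtain ⟨M, rfl⟩ : ∃ M, N = M + 1 := ⟨N - 1, by omega⟩
    obtain ⟨c, w, hw, rfl⟩ := exists_eq_smul_add_of_mem_Wlt_succ hu
    have hΔw : Δ w ∈ Wlt P M := delta_mem_Wlt hΔ0 hΔsucc hw
    have hc : c = 0 := by
      refine eq_zero_of_smul_mem_Wlt hP (m := M) ?_
      have hsub := Submodule.sub_mem _ (Wlt_mono (by omega) hΔu) hΔw
      rwa [map_add, map_smul, hΔsucc, add_sub_cancel_right] at hsub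
    subst hc
    rw [zero_smul, zero_add] at hΔu ⊢
    exact ih hw hΔu

theorem IsMonic.of_delta (hP : LinearIndependent ℝ P) (hΔ0 : Δ (P 0) = 0)
    (hΔsucc : ∀ n, Δ (P (n + 1)) = P n) {m N : ℕ} {u : H} (hu : u ∈ Wlt P N)
    (h : IsMonic P m (Δ u)) : IsMonic P (m + 1) u := by
  refine mem_Wlt_succ_of_delta_mem hP hΔ0 hΔsucc (N := max N (m + 2)) ?_ ?_
  · exact Submodule.sub_mem _ (Wlt_mono (le_max_left _ _) hu)
      (P_mem_Wlt (lt_of_lt_of_le (by omega) (le_max_right _ _)))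
  · rwa [map_sub, hΔsucc]

end Laplacian

section Green

variable {P : ℕ → H} {Δ G : H →ₗ[ℝ] H}

theorem IsMonic.green (hP : LinearIndependent ℝ P) (hΔ0 : Δ (P 0) = 0)
    (hΔsucc : ∀ n, Δ (P (n + 1)) = P n) (hGinv : ∀ u ∈ Wtot P, Δ (G u) = u)
    (hGmap : ∀ n, ∀ u ∈ Wlt P (n + 1), G u ∈ Wlt P (n + 2)) {m : ℕ} {u : H}
    (h : IsMonic P m u) : IsMonic P (m + 1) (G u) :=
  IsMonic.of_delta hP hΔ0 hΔsucc (hGmap m u h.mem_Wlt_succ) (by rwa [hGinv u h.mem_Wtot])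

/-- `u - 𝒢 Δ u` is harmonic, hence constant, and `𝒢 q` is orthogonal to constants. -/
theorem inner_green_eq_inner_green_delta (hP : LinearIndependent ℝ P) (hΔ0 : Δ (P 0) = 0)
    (hΔsucc : ∀ n, Δ (P (n + 1)) = P n)
    (hGsym : ∀ u ∈ Wtot P, ∀ v ∈ Wtot P, ⟪G u, v⟫ = ⟪u, G v⟫)
    (hGinv : ∀ u ∈ Wtot P, Δ (G u) = u)
    (hGmap : ∀ n, ∀ u ∈ Wlt P (n + 1), G u ∈ Wlt P (n + 2)) {q u : H} {m : ℕ}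
    (hq : q ∈ Wtot P) (hqortho : ∀ w ∈ Wlt P 2, ⟪q, w⟫ = 0) (hu : u ∈ Wlt P (m + 2)) :
    ⟪G q, u⟫ = ⟪G q, G (Δ u)⟫ := by
  have hΔu : Δ u ∈ Wlt P (m + 1) := delta_mem_Wlt hΔ0 hΔsucc hu
  have hharm : Δ (u - G (Δ u)) = 0 := by
    rw [map_sub, hGinv _ (Wlt_le_Wtot _ hΔu), sub_self]
  have hconst : u - G (Δ u) ∈ Wlt P 1 :=
    mem_Wlt_succ_of_delta_mem hP hΔ0 hΔsucc (Submodule.sub_mem _ hu (hGmap m _ hΔu))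
      (hharm ▸ zero_mem _)
  have hzero : ⟪G q, u - G (Δ u)⟫ = 0 := by
    rw [hGsym _ hq _ (Wlt_le_Wtot _ hconst)]
    exact hqortho _ (hGmap 0 _ hconst)
  rwa [inner_sub_right, sub_eq_zero] at hzero

theorem innerS_green_eq_norm_sq (hP : LinearIndependent ℝ P) (hΔ0 : Δ (P 0) = 0)
    (hΔsucc : ∀ n, Δ (P (n + 1)) = P n)
    (hGsym : ∀ u ∈ Wtot P, ∀ v ∈ Wtot P, ⟪G u, v⟫ = ⟪u, G v⟫)
    (hGinv : ∀ u ∈ Wtot P, Δ (G u) = u)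
    (hGmap : ∀ n, ∀ u ∈ Wlt P (n + 1), G u ∈ Wlt P (n + 2)) {m : ℕ} {q u : H}
    (hq : IsMonic P (m + 1) q) (hqortho : ∀ w ∈ Wlt P (m + 1), ⟪q, w⟫ = 0)
    (hu : IsMonic P m u) (χ : ℝ) : innerS Δ χ (G q) u = ‖q‖ ^ 2 := by
  rw [innerS, hGinv q hq.mem_Wtot,
    hqortho _ (Wlt_mono m.le_succ (delta_mem_Wlt hΔ0 hΔsucc hu.mem_Wlt_succ)), mul_zero,
    add_zero, hGsym _ hq.mem_Wtot _ hu.mem_Wtot,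
    hq.inner_eq_norm_sq hqortho (hu.green hP hΔ0 hΔsucc hGinv hGmap)]

theorem innerS_green_eq_inner_green_delta (hP : LinearIndependent ℝ P) (hΔ0 : Δ (P 0) = 0)
    (hΔsucc : ∀ n, Δ (P (n + 1)) = P n)
    (hGsym : ∀ u ∈ Wtot P, ∀ v ∈ Wtot P, ⟪G u, v⟫ = ⟪u, G v⟫)
    (hGinv : ∀ u ∈ Wtot P, Δ (G u) = u)
    (hGmap : ∀ n, ∀ u ∈ Wlt P (n + 1), G u ∈ Wlt P (n + 2)) {m : ℕ} {q u : H}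
    (hq : q ∈ Wtot P) (hqortho : ∀ w ∈ Wlt P (m + 2), ⟪q, w⟫ = 0)
    (hu : u ∈ Wlt P (m + 3)) (χ : ℝ) : innerS Δ χ (G q) u = ⟪G q, G (Δ u)⟫ := by
  rw [innerS, hGinv q hq, hqortho _ (delta_mem_Wlt hΔ0 hΔsucc hu), mul_zero, add_zero]
  exact inner_green_eq_inner_green_delta hP hΔ0 hΔsucc hGsym hGinv hGmap hq
    (fun w hw => hqortho w (Wlt_mono (by omega) hw)) hu

theorem tendsto_green {α : Type*} {l : Filter α} {C : ℝ}
    (hGbound : ∀ u ∈ Wtot P, ‖G u‖ ≤ C * ‖u‖) {r : α → H} {x : H}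
    (hr : Tendsto r l (nhds x)) (hrW : ∀ᶠ a in l, r a - x ∈ Wtot P) :
    Tendsto (fun a => G (r a)) l (nhds (G x)) := by
  rw [tendsto_iff_norm_sub_tendsto_zero] at hr ⊢
  refine squeeze_zero_norm' ?_ (by simpa using hr.const_mul C)
  filter_upwards [hrW] with a ha
  rw [norm_norm, ← map_sub]
  exact hGbound _ ha

end Green

section Sobolev

variable {Δ : H →ₗ[ℝ] H}

theorem innerS_self (Δ : H →ₗ[ℝ] H) (χ : ℝ) (u : H) :
    innerS Δ χ u u = ‖u‖ ^ 2 + χ * ‖Δ u‖ ^ 2 := by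
  rw [innerS, real_inner_self_eq_norm_sq, real_inner_self_eq_norm_sq]

theorem innerS_self_le_of_forall_innerS_eq_zero {χ : ℝ} (hχ : 0 ≤ χ) {W : Submodule ℝ H}
    {s v : H} (hs : ∀ w ∈ W, innerS Δ χ s w = 0) (hv : v - s ∈ W) :
    innerS Δ χ s s ≤ innerS Δ χ v v := by
  have hexpand : innerS Δ χ v v = innerS Δ χ s s + 2 * innerS Δ χ s (v - s)
      + innerS Δ χ (v - s) (v - s) := by
    conv_lhs => rw [← add_sub_cancel s v]
    simp only [innerS, map_add, real_inner_add_add_self]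
    ring
  have hnonneg : 0 ≤ innerS Δ χ (v - s) (v - s) := by
    rw [innerS_self]; positivity
  rw [hexpand, hs _ hv]
  linarith

/-- Pythagoras for `r χ = p + (r χ - p)` turns the bound into `‖q χ‖² + χ ‖r χ - p‖² ≤ c`. -/
theorem tendsto_of_norm_sq_add_mul_norm_sq_le {q r : ℝ → H} {p : H} {c : ℝ}
    (hortho : ∀ᶠ χ in atTop, ⟪p, r χ - p⟫ = 0)
    (hle : ∀ᶠ χ in atTop, ‖q χ‖ ^ 2 + χ * ‖r χ‖ ^ 2 ≤ c + χ * ‖p‖ ^ 2) :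
    Tendsto (fun χ => (‖q χ‖ ^ 2 + χ * ‖r χ‖ ^ 2) / χ) atTop (nhds (‖p‖ ^ 2)) ∧
      Tendsto r atTop (nhds p) := by
  have hbound : ∀ᶠ χ in atTop, 0 < χ ∧ ‖r χ‖ ^ 2 = ‖p‖ ^ 2 + ‖r χ - p‖ ^ 2 ∧
      ‖q χ‖ ^ 2 + χ * ‖r χ - p‖ ^ 2 ≤ c := by
    filter_upwards [hortho, hle, eventually_gt_atTop 0] with χ hχo hχle hχ
    have hpyth : ‖r χ‖ ^ 2 = ‖p‖ ^ 2 + ‖r χ - p‖ ^ 2 := by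
      conv_lhs => rw [← add_sub_cancel p (r χ)]
      rw [norm_add_sq_real, hχo]; ring
    exact ⟨hχ, hpyth, by rw [hpyth] at hχle; linarith⟩
  have hdecay : Tendsto (fun χ : ℝ => c / χ) atTop (nhds 0) :=
    tendsto_const_nhds.div_atTop tendsto_id
  constructor
  · refine tendsto_of_tendsto_of_tendsto_of_le_of_le' tendsto_const_nhds
      (by simpa using hdecay.const_add (‖p‖ ^ 2)) ?_ ?_
    · filter_upwards [hbound] with χ ⟨hχ, hpyth, _⟩
      rw [le_div_iff₀ hχ, hpyth]
      nlinarith [sq_nonneg ‖q χ‖, sq_nonneg ‖r χ - p‖]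
    · filter_upwards [hbound] with χ ⟨hχ, hpyth, hχle⟩
      rw [div_le_iff₀ hχ, add_mul, div_mul_cancel₀ _ hχ.ne', hpyth]
      linarith
  · have hsq : Tendsto (fun χ => ‖r χ - p‖ ^ 2) atTop (nhds 0) := by
      refine squeeze_zero' (.of_forall fun _ => sq_nonneg _) ?_ hdecay
      filter_upwards [hbound] with χ ⟨hχ, _, hχle⟩
      rw [le_div_iff₀ hχ]
      nlinarith [sq_nonneg ‖q χ‖]
    rw [tendsto_iff_norm_sub_tendsto_zero]
    simpa only [Real.sqrt_sq (norm_nonneg _), Real.sqrt_zero] using hsq.sqrt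

theorem tendsto_sobolev_norm_sq_div_and_delta {P : ℕ → H} (hΔ0 : Δ (P 0) = 0)
    (hΔsucc : ∀ n, Δ (P (n + 1)) = P n) {m : ℕ} {p v : H} {q : ℝ → H}
    (hp : IsMonic P m p) (hportho : ∀ w ∈ Wlt P m, ⟪p, w⟫ = 0)
    (hv : IsMonic P (m + 1) v) (hΔv : Δ v = p)
    (hq : ∀ χ : ℝ, 0 < χ → IsMonic P (m + 1) (q χ))
    (hqortho : ∀ χ : ℝ, 0 < χ → ∀ w ∈ Wlt P (m + 1), innerS Δ χ (q χ) w = 0) :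
    Tendsto (fun χ => (‖q χ‖ ^ 2 + χ * ‖Δ (q χ)‖ ^ 2) / χ) atTop
        (nhds (‖p‖ ^ 2)) ∧
      Tendsto (fun χ => Δ (q χ)) atTop (nhds p) := by
  refine tendsto_of_norm_sq_add_mul_norm_sq_le (c := ‖v‖ ^ 2) ?_ ?_
  · filter_upwards [eventually_gt_atTop 0] with χ hχ
    exact hportho _ (((hq χ hχ).delta hΔ0 hΔsucc).sub_mem hp)
  · filter_upwards [eventually_gt_atTop 0] with χ hχ
    have hmin := innerS_self_le_of_forall_innerS_eq_zero hχ.le (hqortho χ hχ)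
      (hv.sub_mem (hq χ hχ))
    rwa [innerS_self, innerS_self, hΔv] at hmin

end Sobolev

theorem statement13_general
    (P : ℕ → H) (hP : LinearIndependent ℝ P)
    (Δ G : H →ₗ[ℝ] H)
    (hΔ0 : Δ (P 0) = 0) (hΔsucc : ∀ n, Δ (P (n + 1)) = P n)
    (hGsym : ∀ u ∈ Wtot P, ∀ v ∈ Wtot P, ⟪ G u, v ⟫ = ⟪ u, G v ⟫)
    (hGinv : ∀ u ∈ Wtot P, Δ (G u) = u)
    (hGmap : ∀ n, ∀ u ∈ Wlt P (n + 1), G u ∈ Wlt P (n + 2))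
    (C : ℝ)
    (hGbound : ∀ u ∈ Wtot P, ‖G u‖ ≤ C * ‖u‖)
    (p : ℕ → H)
    (hpmonic : ∀ n, p n - P n ∈ Wlt P n)
    (hportho : ∀ n, ∀ w ∈ Wlt P n, ⟪ p n, w ⟫ = 0)
    (s : ℝ → ℕ → H)
    (hsmonic : ∀ χ : ℝ, 0 < χ → ∀ n, s χ n - P n ∈ Wlt P n)
    (hsortho : ∀ χ : ℝ, 0 < χ → ∀ n, ∀ w ∈ Wlt P n, innerS Δ χ (s χ n) w = 0)
    (n : ℕ) (hn : 2 ≤ n)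
    : Tendsto (fun χ : ℝ => χ *
        (innerS Δ χ (G (p n)) (s χ (n - 1)) /
          (‖s χ (n - 1)‖ ^ 2 + χ * ‖Δ (s χ (n - 1))‖ ^ 2)))
        atTop (nhds (‖p n‖ ^ 2 / ‖p (n - 2)‖ ^ 2)) ∧
      Tendsto (fun χ : ℝ => χ *
        (innerS Δ χ (G (p n)) (s χ n) /
          (‖s χ n‖ ^ 2 + χ * ‖Δ (s χ n)‖ ^ 2)))
        atTop (nhds (⟪ G (p n), G (p (n - 1)) ⟫ / ‖p (n - 1)‖ ^ 2)) := by
  obtain ⟨k, rfl⟩ : ∃ k, n = k + 2 := ⟨n - 2, by omega⟩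
  rw [show k + 2 - 1 = k + 1 from rfl, show k + 2 - 2 = k from rfl]
  have hp : ∀ j, IsMonic P j (p j) := hpmonic
  have hs : ∀ χ : ℝ, 0 < χ → ∀ j, IsMonic P j (s χ j) := hsmonic
  have hlim := fun j => tendsto_sobolev_norm_sq_div_and_delta hΔ0 hΔsucc (hp j) (hportho j)
    ((hp j).green hP hΔ0 hΔsucc hGinv hGmap) (hGinv _ (hp j).mem_Wtot)
    (fun χ hχ => hs χ hχ (j + 1)) (fun χ hχ => hsortho χ hχ (j + 1))
  have hp_ne : ∀ j, ‖p j‖ ^ 2 ≠ 0 := fun j =>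
    pow_ne_zero 2 (norm_ne_zero_iff.mpr ((hp j).ne_zero hP))
  have hrescale : ∀ a b χ : ℝ, a / (b / χ) = χ * (a / b) := fun a b χ => by
    rw [div_div_eq_mul_div]; ring
  constructor
  · refine (tendsto_const_nhds.div (hlim k).1 (hp_ne k)).congr' ?_
    filter_upwards [eventually_gt_atTop 0] with χ hχ
    rw [Pi.div_apply, hrescale, innerS_green_eq_norm_sq hP hΔ0 hΔsucc hGsym hGinv hGmap
      (hp (k + 2)) (hportho (k + 2)) (hs χ hχ (k + 1))]
  · have hnum : Tendsto (fun χ => ⟪G (p (k + 2)), G (Δ (s χ (k + 2)))⟫) atTop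
        (nhds ⟪G (p (k + 2)), G (p (k + 1))⟫) := by
      refine tendsto_const_nhds.inner (tendsto_green hGbound (hlim (k + 1)).2 ?_)
      filter_upwards [eventually_gt_atTop 0] with χ hχ
      exact Wlt_le_Wtot _ (((hs χ hχ (k + 2)).delta hΔ0 hΔsucc).sub_mem (hp (k + 1)))
    refine (hnum.div (hlim (k + 1)).1 (hp_ne (k + 1))).congr' ?_
    filter_upwards [eventually_gt_atTop 0] with χ hχ
    rw [Pi.div_apply, hrescale, innerS_green_eq_inner_green_delta hP hΔ0 hΔsucc hGsym hGinv
      hGmap (hp (k + 2)).mem_Wtot (hportho (k + 2)) (hs χ hχ (k + 2)).mem_Wlt_succ]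

/-- For fixed `n ≥ 2`, `lim_{χ→∞} χ b̃_n(χ) = ‖p_n‖₂²/‖p_{n−2}‖₂²` and `lim_{χ→∞} χ a_n(χ) = ⟨f_{n+1}, f_n⟩₂/‖p_{n−1}‖₂²`. -/
theorem statement13
    (P : ℕ → H) (hP : LinearIndependent ℝ P)
    (Δ G : H →ₗ[ℝ] H)
    (hΔ0 : Δ (P 0) = 0) (hΔsucc : ∀ n, Δ (P (n + 1)) = P n)
    (hGsym : ∀ u ∈ Wtot P, ∀ v ∈ Wtot P, ⟪ G u, v ⟫ = ⟪ u, G v ⟫)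
    (hGinv : ∀ u ∈ Wtot P, Δ (G u) = u)
    (hGmap : ∀ n, ∀ u ∈ Wlt P (n + 1), G u ∈ Wlt P (n + 2))
    (C : ℝ) (hC : 0 < C)
    (hGbound : ∀ u ∈ Wtot P, ‖G u‖ ≤ C * ‖u‖)
    (p : ℕ → H)
    (hpmonic : ∀ n, p n - P n ∈ Wlt P n)
    (hportho : ∀ n, ∀ w ∈ Wlt P n, ⟪ p n, w ⟫ = 0)
    (s : ℝ → ℕ → H)
    (hsmonic : ∀ χ : ℝ, 0 < χ → ∀ n, s χ n - P n ∈ Wlt P n)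
    (hsortho : ∀ χ : ℝ, 0 < χ → ∀ n, ∀ w ∈ Wlt P n, innerS Δ χ (s χ n) w = 0)
    (n : ℕ) (hn : 2 ≤ n)
    : Tendsto (fun χ : ℝ => χ *
        (innerS Δ χ (G (p n)) (s χ (n - 1)) /
          (‖s χ (n - 1)‖ ^ 2 + χ * ‖Δ (s χ (n - 1))‖ ^ 2)))
        atTop (nhds (‖p n‖ ^ 2 / ‖p (n - 2)‖ ^ 2)) ∧
      Tendsto (fun χ : ℝ => χ *
        (innerS Δ χ (G (p n)) (s χ n) /
          (‖s χ n‖ ^ 2 + χ * ‖Δ (s χ n)‖ ^ 2)))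
        atTop (nhds (⟪ G (p n), G (p (n - 1)) ⟫ / ‖p (n - 1)‖ ^ 2)) :=
  statement13_general P hP Δ G hΔ0 hΔsucc hGsym hGinv hGmap C hGbound p hpmonic hportho s hsmonic
    hsortho n hn
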